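/- Let R be a quasi-unital ring. The category of R-bimodules that are smooth on both sides, equipped with the relative tensor product (M, N) ↦ M ⊗_R N, is a monoidal category with unit object R: for every two-sidedly smooth bimodule M there are natural isomorphisms R ⊗_R M ≅ M and M ⊗_R R ≅ M, and the tensor product of two two-sidedly smooth bimodules is again two-sidedly smooth. -/

import Mathlib

open TensorProduct LinearMap

variable (R : Type) [NonUnitalRing R] [Module ℂ R] [SMulCommClass ℂ R R]
  [IsScalarTower ℂ R R]

/-- The bar differential `R ⊗ R ⊗ R → R ⊗ R`. -/
noncomputable def barD : (R ⊗[ℂ] (R ⊗[ℂ] R)) →ₗ[ℂ] R ⊗[ℂ] R :=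
  (rTensor R (mul' ℂ R)) ∘ₗ (TensorProduct.assoc ℂ R R R).symm.toLinearMap
    - lTensor R (mul' ℂ R)

/-- `R` is quasi-unital. -/
def IsQuasiUnital : Prop :=
  ∃ f : ((R ⊗[ℂ] R) ⧸ LinearMap.range (barD R)) →ₗ[ℂ] R,
    f ∘ₗ (LinearMap.range (barD R)).mkQ = mul' ℂ R ∧ Function.Bijective f

section Bimod

variable {M : Type} [AddCommGroup M] [Module ℂ M]

/-- Left-module bar differential `R ⊗ R ⊗ M → R ⊗ M` (left action `l`). -/
noncomputable def barDl (l : R →ₗ[ℂ] M →ₗ[ℂ] M) :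
    (R ⊗[ℂ] (R ⊗[ℂ] M)) →ₗ[ℂ] R ⊗[ℂ] M :=
  (rTensor M (mul' ℂ R)) ∘ₗ (TensorProduct.assoc ℂ R R M).symm.toLinearMap
    - lTensor R (TensorProduct.lift l)

/-- Right-module bar differential `M ⊗ R ⊗ R → M ⊗ R` (right action `ρ`,
`m · r := ρ r m`). -/
noncomputable def barDr (ρ : R →ₗ[ℂ] M →ₗ[ℂ] M) :
    (M ⊗[ℂ] (R ⊗[ℂ] R)) →ₗ[ℂ] M ⊗[ℂ] R :=
  (rTensor R (TensorProduct.lift ρ.flip)) ∘ₗ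
      (TensorProduct.assoc ℂ M R R).symm.toLinearMap
    - lTensor M (mul' ℂ R)

variable {N : Type} [AddCommGroup N] [Module ℂ N]

/-- Relations differential `M ⊗ R ⊗ N → M ⊗ N` for the relative tensor product
`M ⊗_R N` (right action `ρM` on `M`, left action `lN` on `N`). -/
noncomputable def barDRel (ρM : R →ₗ[ℂ] M →ₗ[ℂ] M) (lN : R →ₗ[ℂ] N →ₗ[ℂ] N) :
    (M ⊗[ℂ] (R ⊗[ℂ] N)) →ₗ[ℂ] M ⊗[ℂ] N :=
  (rTensor N (TensorProduct.lift ρM.flip)) ∘ₗ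
      (TensorProduct.assoc ℂ M R N).symm.toLinearMap
    - lTensor M (TensorProduct.lift lN)

/-- The relative tensor product `M ⊗_R N`. -/
noncomputable abbrev RelTensor (ρM : R →ₗ[ℂ] M →ₗ[ℂ] M) (lN : R →ₗ[ℂ] N →ₗ[ℂ] N) :=
  (M ⊗[ℂ] N) ⧸ LinearMap.range (barDRel R ρM lN)

end Bimod

/-!
Left smoothness of `M` says that the action `R ⊗ M → M` is the coequalizer of
`R ⊗ R ⊗ M ⇉ R ⊗ M`, so `R`-balanced maps out of `R ⊗ M` factor through `M`. Factoring
`(r ⊗ m, n) ↦ [r ⊗ [m ⊗ n]]` this way gives a map `M ⊗ N → R ⊗_R (M ⊗_R N)`; it respects the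
relations of `M ⊗_R N` because the two actions on `M` commute, and the induced map is inverse to
the action `R ⊗_R (M ⊗_R N) → M ⊗_R N`. Right smoothness of `M ⊗_R N` is the mirror image,
using right smoothness of `N`. The unit isomorphisms are the smoothness hypotheses themselves,
since a map out of a quotient is determined by its composite with the quotient map.
-/

set_option linter.unusedSectionVars false

section Smooth

variable {M : Type} [AddCommGroup M] [Module ℂ M]

def IsLeftSmooth (l : R →ₗ[ℂ] M →ₗ[ℂ] M) : Prop :=
  ∃ f : ((R ⊗[ℂ] M) ⧸ range (barDl R l)) →ₗ[ℂ] M,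
    f ∘ₗ (range (barDl R l)).mkQ = lift l ∧ Function.Bijective f

def IsRightSmooth (ρ : R →ₗ[ℂ] M →ₗ[ℂ] M) : Prop :=
  ∃ f : ((M ⊗[ℂ] R) ⧸ range (barDr R ρ)) →ₗ[ℂ] M,
    f ∘ₗ (range (barDr R ρ)).mkQ = lift ρ.flip ∧ Function.Bijective f

@[simp]
lemma barDl_tmul (l : R →ₗ[ℂ] M →ₗ[ℂ] M) (r s : R) (m : M) :
    barDl R l (r ⊗ₜ (s ⊗ₜ m)) = (r * s) ⊗ₜ m - r ⊗ₜ l s m := by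
  simp [barDl]

@[simp]
lemma barDr_tmul (ρ : R →ₗ[ℂ] M →ₗ[ℂ] M) (m : M) (s r : R) :
    barDr R ρ (m ⊗ₜ (s ⊗ₜ r)) = ρ s m ⊗ₜ r - m ⊗ₜ (s * r) := by
  simp [barDr]

lemma mkQ_barDl_mul_tmul (l : R →ₗ[ℂ] M →ₗ[ℂ] M) (r s : R) (m : M) :
    (range (barDl R l)).mkQ ((r * s) ⊗ₜ m) = (range (barDl R l)).mkQ (r ⊗ₜ l s m) :=
  (Submodule.Quotient.eq _).2 ⟨r ⊗ₜ (s ⊗ₜ m), barDl_tmul R l r s m⟩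

lemma mkQ_barDr_tmul_mul (ρ : R →ₗ[ℂ] M →ₗ[ℂ] M) (m : M) (s r : R) :
    (range (barDr R ρ)).mkQ (ρ s m ⊗ₜ r) = (range (barDr R ρ)).mkQ (m ⊗ₜ (s * r)) :=
  (Submodule.Quotient.eq _).2 ⟨m ⊗ₜ (s ⊗ₜ r), barDr_tmul R ρ m s r⟩

lemma bijective_of_comp_mkQ_eq {S A B : Type*} [Ring S] [AddCommGroup A] [Module S A]
    [AddCommGroup B] [Module S B] {K : Submodule S A} {φ : A →ₗ[S] B} {g : (A ⧸ K) →ₗ[S] B}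
    (hg : g ∘ₗ K.mkQ = φ) (hφ : Function.Surjective φ) (h : B →ₗ[S] A ⧸ K)
    (hh : h ∘ₗ φ = K.mkQ) : Function.Bijective g := by
  have hhg : h ∘ₗ g = LinearMap.id := Submodule.linearMap_qext _ (by rw [comp_assoc, hg, hh]; rfl)
  exact ⟨Function.LeftInverse.injective (g := h) (LinearMap.congr_fun hhg),
    Function.Surjective.of_comp (g := K.mkQ) (by rwa [← coe_comp, hg])⟩

namespace IsLeftSmooth

variable {R} {l : R →ₗ[ℂ] M →ₗ[ℂ] M} (hl : IsLeftSmooth R l)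
include hl

lemma bijective {f : ((R ⊗[ℂ] M) ⧸ range (barDl R l)) →ₗ[ℂ] M}
    (hf : f ∘ₗ (range (barDl R l)).mkQ = lift l) : Function.Bijective f := by
  obtain ⟨f₀, hf₀, hbij⟩ := hl
  rwa [Submodule.linearMap_qext _ (hf.trans hf₀.symm)]

lemma surjective_lift : Function.Surjective (lift l) := by
  obtain ⟨f, hf, hbij⟩ := hl
  rw [← hf]
  exact hbij.2.comp (Submodule.mkQ_surjective _)

lemma exists_comp_lift_eq {Z : Type*} [AddCommGroup Z] [Module ℂ Z] (B : R ⊗[ℂ] M →ₗ[ℂ] Z)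
    (hB : ∀ r s m, B ((r * s) ⊗ₜ m) = B (r ⊗ₜ l s m)) : ∃ Ψ : M →ₗ[ℂ] Z, Ψ ∘ₗ lift l = B := by
  obtain ⟨f, hf, hbij⟩ := hl
  have hker : range (barDl R l) ≤ ker B := by
    rw [range_le_ker_iff]
    ext r s m
    simp [hB]
  refine ⟨(range (barDl R l)).liftQ B hker ∘ₗ (LinearEquiv.ofBijective f hbij).symm.toLinearMap, ?_⟩
  rw [← hf]
  ext x
  simp

end IsLeftSmooth

namespace IsRightSmooth

variable {R} {ρ : R →ₗ[ℂ] M →ₗ[ℂ] M} (hρ : IsRightSmooth R ρ)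
include hρ

lemma bijective {f : ((M ⊗[ℂ] R) ⧸ range (barDr R ρ)) →ₗ[ℂ] M}
    (hf : f ∘ₗ (range (barDr R ρ)).mkQ = lift ρ.flip) : Function.Bijective f := by
  obtain ⟨f₀, hf₀, hbij⟩ := hρ
  rwa [Submodule.linearMap_qext _ (hf.trans hf₀.symm)]

lemma surjective_lift : Function.Surjective (lift ρ.flip) := by
  obtain ⟨f, hf, hbij⟩ := hρ
  rw [← hf]
  exact hbij.2.comp (Submodule.mkQ_surjective _)

lemma exists_comp_lift_eq {Z : Type*} [AddCommGroup Z] [Module ℂ Z] (B : M ⊗[ℂ] R →ₗ[ℂ] Z)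
    (hB : ∀ m s r, B (ρ s m ⊗ₜ r) = B (m ⊗ₜ (s * r))) :
    ∃ Ψ : M →ₗ[ℂ] Z, Ψ ∘ₗ lift ρ.flip = B := by
  obtain ⟨f, hf, hbij⟩ := hρ
  have hker : range (barDr R ρ) ≤ ker B := by
    rw [range_le_ker_iff]
    ext m s r
    simp [hB]
  refine ⟨(range (barDr R ρ)).liftQ B hker ∘ₗ (LinearEquiv.ofBijective f hbij).symm.toLinearMap, ?_⟩
  rw [← hf]
  ext x
  simp

end IsRightSmooth

end Smooth

section RelativeTensor

variable {M N : Type} [AddCommGroup M] [Module ℂ M] [AddCommGroup N] [Module ℂ N]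
  (ρM : R →ₗ[ℂ] M →ₗ[ℂ] M) (lN : R →ₗ[ℂ] N →ₗ[ℂ] N)

@[simp]
lemma barDRel_tmul (m : M) (s : R) (n : N) :
    barDRel R ρM lN (m ⊗ₜ (s ⊗ₜ n)) = ρM s m ⊗ₜ n - m ⊗ₜ lN s n := by
  simp [barDRel]

lemma mkQ_barDRel_tmul (m : M) (s : R) (n : N) :
    (range (barDRel R ρM lN)).mkQ (ρM s m ⊗ₜ n) = (range (barDRel R ρM lN)).mkQ (m ⊗ₜ lN s n) :=
  (Submodule.Quotient.eq _).2 ⟨m ⊗ₜ (s ⊗ₜ n), barDRel_tmul R ρM lN m s n⟩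

variable {R ρM lN}

namespace RelTensor

section Left

variable {lM : R →ₗ[ℂ] M →ₗ[ℂ] M} {lT : R →ₗ[ℂ] RelTensor R ρM lN →ₗ[ℂ] RelTensor R ρM lN}
  (hlT : ∀ r m n, lT r ((range (barDRel R ρM lN)).mkQ (m ⊗ₜ n)) =
    (range (barDRel R ρM lN)).mkQ (lM r m ⊗ₜ n))
include hlT

lemma surjective_lift_left (hM : Function.Surjective (lift lM)) :
    Function.Surjective (lift lT) := by
  have hcomp : (range (barDRel R ρM lN)).mkQ ∘ₗ rTensor N (lift lM) =
      lift lT ∘ₗ lTensor R (range (barDRel R ρM lN)).mkQ ∘ₗ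
        (TensorProduct.assoc ℂ R M N).toLinearMap := by
    ext r m n
    simp [hlT, -Submodule.mkQ_apply]
  have h := (Submodule.mkQ_surjective (range (barDRel R ρM lN))).comp
    (rTensor_surjective N hM)
  rw [← coe_comp, hcomp, coe_comp] at h
  exact h.of_comp

lemma exists_comp_lift_left_eq_mkQ (hM : IsLeftSmooth R lM)
    (hcM : ∀ r s m, lM r (ρM s m) = ρM s (lM r m)) :
    ∃ h : RelTensor R ρM lN →ₗ[ℂ] (R ⊗[ℂ] RelTensor R ρM lN) ⧸ range (barDl R lT),
      h ∘ₗ lift lT = (range (barDl R lT)).mkQ := by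
  obtain ⟨Ψ, hΨ⟩ := hM.exists_comp_lift_eq (curry ((range (barDl R lT)).mkQ ∘ₗ
      lTensor R (range (barDRel R ρM lN)).mkQ ∘ₗ (TensorProduct.assoc ℂ R M N).toLinearMap))
    fun r s m => by
      ext n
      simp [-Submodule.mkQ_apply, mkQ_barDl_mul_tmul, hlT]
  have hΨl : ∀ r m n, Ψ (lM r m) n = (range (barDl R lT)).mkQ
      (r ⊗ₜ ((range (barDRel R ρM lN)).mkQ (m ⊗ₜ n) : RelTensor R ρM lN)) := by
    intro r m n
    simpa [-Submodule.mkQ_apply] using congr($hΨ (r ⊗ₜ m) n)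
  have hΨρ : ∀ s m n, Ψ (ρM s m) n = Ψ m (lN s n) := by
    intro s
    suffices Ψ ∘ₗ ρM s ∘ₗ lift lM = Ψ.compl₂ (lN s) ∘ₗ lift lM by
      intro m n
      obtain ⟨x, rfl⟩ := hM.surjective_lift m
      exact congr($this x n)
    ext r m n
    simp [-Submodule.mkQ_apply, ← hcM, hΨl, mkQ_barDRel_tmul]
  refine ⟨(range (barDRel R ρM lN)).liftQ (lift Ψ) ?_, ?_⟩
  · rw [range_le_ker_iff]
    ext m s n
    simp [hΨρ]
  · ext r m n
    simp only [AlgebraTensorModule.curry_apply, curry_apply, coe_comp, coe_restrictScalars,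
      Function.comp_apply, lift.tmul, hlT]
    exact hΨl r m n

lemma bijective_left (hM : IsLeftSmooth R lM) (hcM : ∀ r s m, lM r (ρM s m) = ρM s (lM r m))
    {g : ((R ⊗[ℂ] RelTensor R ρM lN) ⧸ range (barDl R lT)) →ₗ[ℂ] RelTensor R ρM lN}
    (hg : g ∘ₗ (range (barDl R lT)).mkQ = lift lT) : Function.Bijective g :=
  have ⟨h, hh⟩ := exists_comp_lift_left_eq_mkQ hlT hM hcM
  bijective_of_comp_mkQ_eq hg (surjective_lift_left hlT hM.surjective_lift) h hh

end Left

section Right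

variable {ρN : R →ₗ[ℂ] N →ₗ[ℂ] N} {ρT : R →ₗ[ℂ] RelTensor R ρM lN →ₗ[ℂ] RelTensor R ρM lN}
  (hρT : ∀ r m n, ρT r ((range (barDRel R ρM lN)).mkQ (m ⊗ₜ n)) =
    (range (barDRel R ρM lN)).mkQ (m ⊗ₜ ρN r n))
include hρT

lemma surjective_lift_right (hN : Function.Surjective (lift ρN.flip)) :
    Function.Surjective (lift ρT.flip) := by
  have hcomp : (range (barDRel R ρM lN)).mkQ ∘ₗ lTensor M (lift ρN.flip) =
      lift ρT.flip ∘ₗ rTensor R (range (barDRel R ρM lN)).mkQ ∘ₗ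
        (TensorProduct.assoc ℂ M N R).symm.toLinearMap := by
    ext m n r
    simp [hρT, -Submodule.mkQ_apply]
  have h := (Submodule.mkQ_surjective (range (barDRel R ρM lN))).comp
    (lTensor_surjective M hN)
  rw [← coe_comp, hcomp, coe_comp] at h
  exact h.of_comp

lemma exists_comp_lift_right_eq_mkQ (hN : IsRightSmooth R ρN)
    (hcN : ∀ r s n, lN r (ρN s n) = ρN s (lN r n)) :
    ∃ h : RelTensor R ρM lN →ₗ[ℂ] (RelTensor R ρM lN ⊗[ℂ] R) ⧸ range (barDr R ρT),
      h ∘ₗ lift ρT.flip = (range (barDr R ρT)).mkQ := by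
  obtain ⟨Ψ, hΨ⟩ := hN.exists_comp_lift_eq (curry ((range (barDr R ρT)).mkQ ∘ₗ
      rTensor R (range (barDRel R ρM lN)).mkQ ∘ₗ
        (TensorProduct.assoc ℂ M N R).symm.toLinearMap)).flip
    fun n s r => by
      ext m
      simp [-Submodule.mkQ_apply, ← hρT, mkQ_barDr_tmul_mul]
  have hΨρ : ∀ r n m, Ψ (ρN r n) m = (range (barDr R ρT)).mkQ
      (((range (barDRel R ρM lN)).mkQ (m ⊗ₜ n) : RelTensor R ρM lN) ⊗ₜ r) := by
    intro r n m
    simpa [-Submodule.mkQ_apply] using congr($hΨ (n ⊗ₜ r) m)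
  have hΨl : ∀ s n m, Ψ (lN s n) m = Ψ n (ρM s m) := by
    intro s
    suffices Ψ ∘ₗ lN s ∘ₗ lift ρN.flip = Ψ.compl₂ (ρM s) ∘ₗ lift ρN.flip by
      intro n m
      obtain ⟨x, rfl⟩ := hN.surjective_lift n
      exact congr($this x m)
    ext n r m
    simp [-Submodule.mkQ_apply, hcN, hΨρ, mkQ_barDRel_tmul]
  refine ⟨(range (barDRel R ρM lN)).liftQ (lift Ψ.flip) ?_, ?_⟩
  · rw [range_le_ker_iff]
    ext m s n
    simp [hΨl]
  · ext m n r
    simp only [AlgebraTensorModule.curry_apply, curry_apply, coe_comp, coe_restrictScalars,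
      Function.comp_apply, lift.tmul, flip_apply, hρT]
    exact hΨρ r n m

lemma bijective_right (hN : IsRightSmooth R ρN) (hcN : ∀ r s n, lN r (ρN s n) = ρN s (lN r n))
    {g : ((RelTensor R ρM lN ⊗[ℂ] R) ⧸ range (barDr R ρT)) →ₗ[ℂ] RelTensor R ρM lN}
    (hg : g ∘ₗ (range (barDr R ρT)).mkQ = lift ρT.flip) : Function.Bijective g :=
  have ⟨h, hh⟩ := exists_comp_lift_right_eq_mkQ hρT hN hcN
  bijective_of_comp_mkQ_eq hg (surjective_lift_right hρT hN.surjective_lift) h hh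

end Right

end RelTensor

end RelativeTensor

theorem smooth_bimodules_monoidal
    -- the bimodule `M`
    {M : Type} [AddCommGroup M] [Module ℂ M]
    (lM ρM : R →ₗ[ℂ] M →ₗ[ℂ] M)
    (hcM : ∀ (r s : R) (m : M), lM r (ρM s m) = ρM s (lM r m))
    (hMl : ∃ f : ((R ⊗[ℂ] M) ⧸ LinearMap.range (barDl R lM)) →ₗ[ℂ] M,
      f ∘ₗ (LinearMap.range (barDl R lM)).mkQ = TensorProduct.lift lM ∧
      Function.Bijective f)
    (hMr : ∃ f : ((M ⊗[ℂ] R) ⧸ LinearMap.range (barDr R ρM)) →ₗ[ℂ] M,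
      f ∘ₗ (LinearMap.range (barDr R ρM)).mkQ = TensorProduct.lift ρM.flip ∧
      Function.Bijective f)
    -- the bimodule `N`
    {N : Type} [AddCommGroup N] [Module ℂ N]
    (lN ρN : R →ₗ[ℂ] N →ₗ[ℂ] N)
    (hcN : ∀ (r s : R) (n : N), lN r (ρN s n) = ρN s (lN r n))
    (hNr : ∃ f : ((N ⊗[ℂ] R) ⧸ LinearMap.range (barDr R ρN)) →ₗ[ℂ] N,
      f ∘ₗ (LinearMap.range (barDr R ρN)).mkQ = TensorProduct.lift ρN.flip ∧
      Function.Bijective f)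
    -- the induced bimodule structure on `T = M ⊗_R N`
    (lT ρT : R →ₗ[ℂ] RelTensor R ρM lN →ₗ[ℂ] RelTensor R ρM lN)
    (hlT : ∀ (r : R) (m : M) (n : N),
      lT r ((LinearMap.range (barDRel R ρM lN)).mkQ (m ⊗ₜ[ℂ] n)) =
        (LinearMap.range (barDRel R ρM lN)).mkQ ((lM r m) ⊗ₜ[ℂ] n))
    (hρT : ∀ (r : R) (m : M) (n : N),
      ρT r ((LinearMap.range (barDRel R ρM lN)).mkQ (m ⊗ₜ[ℂ] n)) =
        (LinearMap.range (barDRel R ρM lN)).mkQ (m ⊗ₜ[ℂ] (ρN r n))) :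
    -- unit isomorphisms: `R ⊗_R M ≅ M` and `M ⊗_R R ≅ M`
    (∀ f : ((R ⊗[ℂ] M) ⧸ LinearMap.range (barDl R lM)) →ₗ[ℂ] M,
      f ∘ₗ (LinearMap.range (barDl R lM)).mkQ = TensorProduct.lift lM →
      Function.Bijective f) ∧
    (∀ f : ((M ⊗[ℂ] R) ⧸ LinearMap.range (barDr R ρM)) →ₗ[ℂ] M,
      f ∘ₗ (LinearMap.range (barDr R ρM)).mkQ = TensorProduct.lift ρM.flip →
      Function.Bijective f) ∧
    -- `M ⊗_R N` is again smooth on both sides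
    (∀ g : ((R ⊗[ℂ] RelTensor R ρM lN) ⧸ LinearMap.range (barDl R lT)) →ₗ[ℂ]
        RelTensor R ρM lN,
      g ∘ₗ (LinearMap.range (barDl R lT)).mkQ = TensorProduct.lift lT →
      Function.Bijective g) ∧
    (∀ g : ((RelTensor R ρM lN ⊗[ℂ] R) ⧸ LinearMap.range (barDr R ρT)) →ₗ[ℂ]
        RelTensor R ρM lN,
      g ∘ₗ (LinearMap.range (barDr R ρT)).mkQ = TensorProduct.lift ρT.flip →
      Function.Bijective g) :=
  ⟨fun _ hf => IsLeftSmooth.bijective hMl hf,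
    fun _ hf => IsRightSmooth.bijective hMr hf,
    fun _ hg => RelTensor.bijective_left hlT hMl hcM hg,
    fun _ hg => RelTensor.bijective_right hρT hNr hcN hg⟩
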